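/- Let d ≥ 1, D ∈ ℝ^{d×d}, let γ : (0,∞) → ℝ^{d×d} be Bochner integrable, and let r be the differential resolvent of γ with drift matrix D; assume r is bounded on [0,∞). Then for every ζ ∈ ℂ with Re ζ > 0 the Laplace transforms Lr(ζ) = ∫₀^∞ e^{−ζt} r(t) dt and Lγ(ζ) = ∫₀^∞ e^{−ζt} γ(t) dt are well defined and satisfy (ζ I + D + Lγ(ζ)) · Lr(ζ) = I; in particular, the matrix Lr(ζ) is invertible for every ζ with Re ζ > 0. -/

import Mathlib

open MeasureTheory Matrix Set Filter
open scoped Matrix.Norms.L2Operator Real Topology ComplexOrder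

noncomputable section

/-- `r` (with derivative `r'`) is the differential resolvent of the kernel `γ` with drift
matrix `D`: `r` is continuously differentiable on `[0,∞)`, `r(0) = I`, and
`r′(t) = -D r(t) - ∫₀ᵗ γ(t-s) r(s) ds = -r(t) D - ∫₀ᵗ r(t-s) γ(s) ds` for all `t ≥ 0`. -/
structure IsDiffResolvent {d : ℕ} (D : Matrix (Fin d) (Fin d) ℝ)
    (γ r r' : ℝ → Matrix (Fin d) (Fin d) ℝ) : Prop where
  init : r 0 = 1
  hasDeriv : ∀ t ∈ Ici (0 : ℝ), HasDerivWithinAt r (r' t) (Ici 0) t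
  contDeriv : ContinuousOn r' (Ici 0)
  eq_left : ∀ t ∈ Ici (0 : ℝ), r' t = -(D * r t) - ∫ s in (0 : ℝ)..t, γ (t - s) * r s
  eq_right : ∀ t ∈ Ici (0 : ℝ), r' t = -(r t * D) - ∫ s in (0 : ℝ)..t, r (t - s) * γ s

/-- Entrywise Laplace transform `Lh(ζ) = ∫₀^∞ e^{-ζt} h(t) dt` of a matrix-valued function. -/
def laplaceMat {d : ℕ} (h : ℝ → Matrix (Fin d) (Fin d) ℝ) (z : ℂ) :
    Matrix (Fin d) (Fin d) ℂ :=
  ∫ t in Ioi (0 : ℝ), Complex.exp (-(z * t)) • (h t).map Complex.ofReal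

/-!
Multiply the resolvent equation `r' = -D r - γ ⋆ r` by `e^{-ζt}` and integrate over `(0, ∞)`.
As `r` is bounded and `Re ζ > 0`, integration by parts turns the transform of `r'` into
`ζ Lr(ζ) - r(0) = ζ Lr(ζ) - I`, while the transform of the convolution `γ ⋆ r` is `Lγ(ζ) Lr(ζ)`.
Hence `-D Lr - Lγ Lr = ζ Lr - I`. The argument works verbatim in any complex Banach algebra,
into which the real matrices are mapped by complexification.
-/

theorem norm_cexp_neg_mul_ofReal (ζ : ℂ) (t : ℝ) :
    ‖Complex.exp (-(ζ * t))‖ = Real.exp (-(ζ.re * t)) := by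
  simp [Complex.norm_exp]

theorem integrableOn_cexp_neg_mul_Ioi {ζ : ℂ} (hζ : 0 < ζ.re) :
    IntegrableOn (fun t : ℝ => Complex.exp (-(ζ * t))) (Ioi 0) := by
  simpa only [neg_mul] using integrableOn_exp_mul_complex_Ioi (a := -ζ) (by simpa using hζ) 0

theorem hasDerivAt_cexp_neg_mul_ofReal (ζ : ℂ) (t : ℝ) :
    HasDerivAt (fun t : ℝ => Complex.exp (-(ζ * t))) (-ζ * Complex.exp (-(ζ * t))) t := by
  simpa [mul_comm] using (((hasDerivAt_id (t : ℂ)).const_mul ζ).neg.cexp).comp_ofReal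

section Laplace

variable {E : Type*} [NormedAddCommGroup E] [NormedSpace ℂ E]

def laplace (f : ℝ → E) (ζ : ℂ) : E :=
  ∫ t in Ioi (0 : ℝ), Complex.exp (-(ζ * t)) • f t

variable {f : ℝ → E} {ζ : ℂ} {C : ℝ}

theorem integrableOn_laplace_integrand_of_bounded (hf : ContinuousOn f (Ioi 0))
    (hC : ∀ t ∈ Ici (0 : ℝ), ‖f t‖ ≤ C) (hζ : 0 < ζ.re) :
    IntegrableOn (fun t : ℝ => Complex.exp (-(ζ * t)) • f t) (Ioi 0) :=
  (integrableOn_cexp_neg_mul_Ioi hζ).smul_bdd C (hf.aestronglyMeasurable measurableSet_Ioi)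
    ((ae_restrict_mem measurableSet_Ioi).mono fun t ht => hC t (mem_Ici.2 (le_of_lt ht)))

theorem integrableOn_laplace_integrand_of_integrableOn (hf : IntegrableOn f (Ioi 0))
    (hζ : 0 ≤ ζ.re) :
    IntegrableOn (fun t : ℝ => Complex.exp (-(ζ * t)) • f t) (Ioi 0) := by
  refine hf.bdd_smul 1 (by fun_prop) ((ae_restrict_mem measurableSet_Ioi).mono fun t ht => ?_)
  rw [norm_cexp_neg_mul_ofReal, Real.exp_le_one_iff, neg_nonpos]
  exact mul_nonneg hζ (le_of_lt ht)

theorem tendsto_laplace_integrand_atTop (hC : ∀ t ∈ Ici (0 : ℝ), ‖f t‖ ≤ C) (hζ : 0 < ζ.re) :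
    Tendsto (fun t : ℝ => Complex.exp (-(ζ * t)) • f t) atTop (𝓝 0) := by
  have hexp : Tendsto (fun t : ℝ => C * Real.exp (-(ζ.re * t))) atTop (𝓝 0) := by
    simpa using (Real.tendsto_exp_atBot.comp
      (tendsto_neg_atTop_atBot.comp (tendsto_id.const_mul_atTop hζ))).const_mul C
  refine squeeze_zero_norm' ?_ hexp
  filter_upwards [eventually_ge_atTop 0] with t ht
  rw [norm_smul, norm_cexp_neg_mul_ofReal, mul_comm]
  exact mul_le_mul_of_nonneg_right (hC t ht) (Real.exp_nonneg _)

theorem laplace_eq_smul_laplace_sub_of_hasDerivAt [CompleteSpace E] {f' : ℝ → E}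
    (hf0 : ContinuousWithinAt f (Ici 0) 0)
    (hderiv : ∀ t ∈ Ioi (0 : ℝ), HasDerivAt f (f' t) t) (hC : ∀ t ∈ Ici (0 : ℝ), ‖f t‖ ≤ C)
    (hf' : IntegrableOn (fun t : ℝ => Complex.exp (-(ζ * t)) • f' t) (Ioi 0)) (hζ : 0 < ζ.re) :
    laplace f' ζ = ζ • laplace f ζ - f 0 := by
  have hf : IntegrableOn (fun t : ℝ => Complex.exp (-(ζ * t)) • f t) (Ioi 0) :=
    integrableOn_laplace_integrand_of_bounded
      (fun t ht => (hderiv t ht).continuousAt.continuousWithinAt) hC hζ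
  have hprod : ∀ t ∈ Ioi (0 : ℝ), HasDerivAt (fun t : ℝ => Complex.exp (-(ζ * t)) • f t)
      (Complex.exp (-(ζ * t)) • f' t - ζ • Complex.exp (-(ζ * t)) • f t) t := by
    intro t ht
    refine ((hasDerivAt_cexp_neg_mul_ofReal ζ t).smul (hderiv t ht)).congr_deriv ?_
    rw [smul_smul, neg_mul, neg_smul, sub_eq_add_neg, add_comm]
  have hζf : IntegrableOn (fun t : ℝ => ζ • Complex.exp (-(ζ * t)) • f t) (Ioi 0) := hf.smul ζ
  have hcont : ContinuousWithinAt (fun t : ℝ => Complex.exp (-(ζ * t)) • f t) (Ici 0) 0 :=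
    (Complex.continuous_exp.comp (by fun_prop)).continuousWithinAt.smul hf0
  have hftc := integral_Ioi_of_hasDerivAt_of_tendsto hcont hprod
    (hf'.sub hζf) (tendsto_laplace_integrand_atTop hC hζ)
  rw [integral_sub hf' hζf, integral_smul] at hftc
  simp only [Complex.ofReal_zero, mul_zero, neg_zero, Complex.exp_zero, one_smul,
    zero_sub] at hftc
  rw [laplace, laplace, sub_eq_iff_eq_add.1 hftc]
  abel

end Laplace

section BanachAlgebra

variable {A : Type*} [NormedRing A] [NormedAlgebra ℂ A] {f g : ℝ → A} {ζ : ℂ}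

theorem cexp_smul_intervalIntegral_mul (ζ : ℂ) (x : ℝ) :
    Complex.exp (-(ζ * x)) • ∫ s in (0 : ℝ)..x, g (x - s) * f s =
      ∫ s in (0 : ℝ)..x, (Complex.exp (-(ζ * ↑(x - s))) • g (x - s)) *
        (Complex.exp (-(ζ * s)) • f s) := by
  rw [← intervalIntegral.integral_smul]
  congr 1 with s
  rw [smul_mul_smul_comm, ← Complex.exp_add]
  congr 2
  push_cast
  ring

-- `posConvolution` pairs `f t` with `g (x - t)`, hence the flipped product below.
theorem integrableOn_laplace_integrand_convolution
    (hg : IntegrableOn (fun t : ℝ => Complex.exp (-(ζ * t)) • g t) (Ioi 0))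
    (hf : IntegrableOn (fun t : ℝ => Complex.exp (-(ζ * t)) • f t) (Ioi 0)) :
    IntegrableOn (fun x : ℝ => Complex.exp (-(ζ * x)) • ∫ s in (0 : ℝ)..x, g (x - s) * f s)
      (Ioi 0) := by
  have h := integrable_posConvolution hf hg (ContinuousLinearMap.mul ℝ A).flip
  rw [posConvolution, integrable_indicator_iff measurableSet_Ioi] at h
  simpa only [cexp_smul_intervalIntegral_mul, ContinuousLinearMap.flip_apply,
    ContinuousLinearMap.mul_apply'] using h

theorem laplace_convolution [CompleteSpace A]
    (hg : IntegrableOn (fun t : ℝ => Complex.exp (-(ζ * t)) • g t) (Ioi 0))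
    (hf : IntegrableOn (fun t : ℝ => Complex.exp (-(ζ * t)) • f t) (Ioi 0)) :
    laplace (fun x : ℝ => ∫ s in (0 : ℝ)..x, g (x - s) * f s) ζ = laplace g ζ * laplace f ζ := by
  simpa only [laplace, cexp_smul_intervalIntegral_mul, ContinuousLinearMap.flip_apply,
    ContinuousLinearMap.mul_apply'] using
    integral_posConvolution hf hg (ContinuousLinearMap.mul ℝ A).flip

end BanachAlgebra

theorem laplace_resolvent_mul_eq_one {A : Type*} [NormedRing A] [NormedAlgebra ℂ A]
    [CompleteSpace A] {a : A} {f g : ℝ → A} {C : ℝ} {ζ : ℂ} (hf0 : f 0 = 1)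
    (hcont : ContinuousWithinAt f (Ici 0) 0)
    (hderiv : ∀ t ∈ Ioi (0 : ℝ),
      HasDerivAt f (-(a * f t) - ∫ s in (0 : ℝ)..t, g (t - s) * f s) t)
    (hg : IntegrableOn g (Ioi 0)) (hC : ∀ t ∈ Ici (0 : ℝ), ‖f t‖ ≤ C) (hζ : 0 < ζ.re) :
    (ζ • 1 + a + laplace g ζ) * laplace f ζ = 1 := by
  set e : ℝ → ℂ := fun t => Complex.exp (-(ζ * t))
  set conv : ℝ → A := fun t => ∫ s in (0 : ℝ)..t, g (t - s) * f s
  have hF : IntegrableOn (fun t => e t • f t) (Ioi 0) :=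
    integrableOn_laplace_integrand_of_bounded
      (fun t ht => (hderiv t ht).continuousAt.continuousWithinAt) hC hζ
  have hG : IntegrableOn (fun t => e t • g t) (Ioi 0) :=
    integrableOn_laplace_integrand_of_integrableOn hg hζ.le
  have haF : IntegrableOn (fun t => -(a * (e t • f t))) (Ioi 0) := (hF.const_mul a).neg
  have hconv : IntegrableOn (fun t => e t • conv t) (Ioi 0) :=
    integrableOn_laplace_integrand_convolution hG hF
  have hsplit : (fun t => e t • (-(a * f t) - conv t)) =
      fun t => -(a * (e t • f t)) - e t • conv t := by
    ext t
    rw [smul_sub, smul_neg, mul_smul_comm]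
  have hf' : IntegrableOn (fun t => e t • (-(a * f t) - conv t)) (Ioi 0) :=
    hsplit ▸ haF.sub hconv
  have hbyparts := laplace_eq_smul_laplace_sub_of_hasDerivAt hcont hderiv hC hf' hζ
  rw [hf0, laplace, hsplit, integral_sub haF hconv, integral_neg,
    integral_const_mul_of_integrable hF] at hbyparts
  change -(a * laplace f ζ) - laplace conv ζ = ζ • laplace f ζ - 1 at hbyparts
  rw [laplace_convolution hG hF] at hbyparts
  calc (ζ • 1 + a + laplace g ζ) * laplace f ζ
      = ζ • laplace f ζ - (-(a * laplace f ζ) - laplace g ζ * laplace f ζ) := by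
        rw [add_mul, add_mul, smul_mul_assoc, one_mul]
        abel
    _ = 1 := by rw [hbyparts, sub_sub_cancel]

theorem intervalIntegrable_comp_sub_mul {R : Type*} [NormedRing R] {g f : ℝ → R}
    (hg : IntegrableOn g (Ioi 0)) (hf : ContinuousOn f (Ici 0)) {t : ℝ} (ht : 0 ≤ t) :
    IntervalIntegrable (fun s => g (t - s) * f s) volume 0 t := by
  have hg' : IntervalIntegrable g volume 0 t :=
    (intervalIntegrable_iff_integrableOn_Ioc_of_le ht).2 (hg.mono_set Ioc_subset_Ioi_self)
  have hgt : IntervalIntegrable (fun s => g (t - s)) volume 0 t := by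
    simpa using (hg'.comp_sub_left t).symm
  exact hgt.mul_continuousOn (hf.mono (uIcc_of_le ht ▸ Icc_subset_Ici_self))

namespace Matrix

variable (n : Type*) [Fintype n] [DecidableEq n]

def ofRealCLM : Matrix n n ℝ →L[ℝ] Matrix n n ℂ :=
  LinearMap.toContinuousLinearMap (Complex.ofRealAm.mapMatrix : Matrix n n ℝ →ₐ[ℝ] _).toLinearMap

variable {n}

theorem ofRealCLM_one : ofRealCLM n 1 = 1 :=
  map_one (Complex.ofRealAm.mapMatrix : Matrix n n ℝ →ₐ[ℝ] _)

theorem ofRealCLM_mul (M N : Matrix n n ℝ) :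
    ofRealCLM n (M * N) = ofRealCLM n M * ofRealCLM n N :=
  map_mul (Complex.ofRealAm.mapMatrix : Matrix n n ℝ →ₐ[ℝ] _) M N

end Matrix

namespace IsDiffResolvent

variable {d : ℕ} {D : Matrix (Fin d) (Fin d) ℝ} {γ r r' : ℝ → Matrix (Fin d) (Fin d) ℝ}

theorem continuousOn (hr : IsDiffResolvent D γ r r') : ContinuousOn r (Ici 0) :=
  fun t ht => (hr.hasDeriv t ht).continuousWithinAt

theorem hasDerivAt_ofRealCLM (hr : IsDiffResolvent D γ r r') (hγ : IntegrableOn γ (Ioi 0))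
    {t : ℝ} (ht : 0 < t) :
    HasDerivAt (fun t => ofRealCLM _ (r t))
      (-(ofRealCLM _ D * ofRealCLM _ (r t)) -
        ∫ s in (0 : ℝ)..t, ofRealCLM _ (γ (t - s)) * ofRealCLM _ (r s)) t := by
  have hrt : HasDerivAt r (r' t) t := (hr.hasDeriv t ht.le).hasDerivAt (Ici_mem_nhds ht)
  refine ((ofRealCLM (Fin d)).hasFDerivAt.comp_hasDerivAt t hrt).congr_deriv ?_
  rw [hr.eq_left t ht.le, map_sub, map_neg,
    ← (ofRealCLM (Fin d)).intervalIntegral_comp_comm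
      (intervalIntegrable_comp_sub_mul hγ hr.continuousOn ht.le)]
  simp only [ofRealCLM_mul]

end IsDiffResolvent

theorem laplace_resolvent_identity_general {d : ℕ}
    (D : Matrix (Fin d) (Fin d) ℝ)
    (γ r r' : ℝ → Matrix (Fin d) (Fin d) ℝ)
    (hγ : IntegrableOn γ (Ioi 0))
    (hr : IsDiffResolvent D γ r r')
    (hrb : ∃ C : ℝ, ∀ t ∈ Ici (0 : ℝ), ‖r t‖ ≤ C) :
    ∀ ζ : ℂ, 0 < ζ.re →
      IntegrableOn (fun t : ℝ => Complex.exp (-(ζ * t)) • (r t).map Complex.ofReal)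
        (Ioi 0) ∧
      IntegrableOn (fun t : ℝ => Complex.exp (-(ζ * t)) • (γ t).map Complex.ofReal)
        (Ioi 0) ∧
      (ζ • (1 : Matrix (Fin d) (Fin d) ℂ) + D.map Complex.ofReal + laplaceMat γ ζ) *
          laplaceMat r ζ = 1 ∧
      IsUnit (laplaceMat r ζ) := by
  intro ζ hζ
  obtain ⟨C, hC⟩ := hrb
  set φ := ofRealCLM (Fin d)
  have hrc : ContinuousOn (fun t => φ (r t)) (Ici 0) :=
    φ.continuous.comp_continuousOn hr.continuousOn
  have hγc : IntegrableOn (fun t => φ (γ t)) (Ioi 0) := φ.integrable_comp hγ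
  have hCc : ∀ t ∈ Ici (0 : ℝ), ‖φ (r t)‖ ≤ ‖φ‖ * C := fun t ht => φ.le_opNorm_of_le (hC t ht)
  -- `laplaceMat h ζ` is definitionally `laplace (fun t => φ (h t)) ζ`.
  have key : (ζ • 1 + D.map Complex.ofReal + laplaceMat γ ζ) * laplaceMat r ζ = 1 :=
    laplace_resolvent_mul_eq_one (f := fun t => φ (r t)) (by rw [hr.init, ofRealCLM_one])
      (hrc 0 self_mem_Ici) (fun t ht => hr.hasDerivAt_ofRealCLM hγ ht) hγc hCc hζ
  exact ⟨integrableOn_laplace_integrand_of_bounded (hrc.mono Ioi_subset_Ici_self) hCc hζ,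
    integrableOn_laplace_integrand_of_integrableOn hγc hζ.le, key,
    IsUnit.of_mul_eq_one_right _ key⟩

/-- if the differential resolvent `r` is bounded on `[0,∞)`, then its Laplace
transform satisfies `(ζ I + D + Lγ(ζ)) Lr(ζ) = I` for `Re ζ > 0`; in particular `Lr(ζ)` is
invertible. -/
theorem laplace_resolvent_identity {d : ℕ} (hd : 1 ≤ d)
    (D : Matrix (Fin d) (Fin d) ℝ)
    (γ r r' : ℝ → Matrix (Fin d) (Fin d) ℝ)
    (hγ : IntegrableOn γ (Ioi 0))
    (hr : IsDiffResolvent D γ r r')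
    (hrb : ∃ C : ℝ, ∀ t ∈ Ici (0 : ℝ), ‖r t‖ ≤ C) :
    ∀ ζ : ℂ, 0 < ζ.re →
      IntegrableOn (fun t : ℝ => Complex.exp (-(ζ * t)) • (r t).map Complex.ofReal)
        (Ioi 0) ∧
      IntegrableOn (fun t : ℝ => Complex.exp (-(ζ * t)) • (γ t).map Complex.ofReal)
        (Ioi 0) ∧
      (ζ • (1 : Matrix (Fin d) (Fin d) ℂ) + D.map Complex.ofReal + laplaceMat γ ζ) *
          laplaceMat r ζ = 1 ∧
      IsUnit (laplaceMat r ζ) :=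
  laplace_resolvent_identity_general D γ r r' hγ hr hrb
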